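/- Let n, m ≥ 2, x̄, ȳ ∈ ℝ, sX², sY² > 0, and μ ∈ ℝ a root of the Behrens-Fisher cubic with r = n/m. Define σX² = (x̄−μ)² + sX² and σY² = (ȳ−μ)² + sY². Then (μ, σX², σY²) is a critical point of the log-likelihood ℓ(μ, σX², σY²) = −((n+m)/2)log(2π) − (n/2)log σX² − (m/2)log σY² − (n/2)(sX² + (x̄−μ)²)/σX² − (m/2)(sY² + (ȳ−μ)²)/σY², i.e., all three partial derivatives of ℓ vanish at this point. -/

import Mathlib

noncomputable def ell (n m : ℕ) (xbar ybar sX2 sY2 : ℝ) (μ σX2 σY2 : ℝ) : ℝ :=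
  -((n + m : ℝ)/2) * Real.log (2*Real.pi)
  - ((n : ℝ)/2) * Real.log σX2 - ((m : ℝ)/2) * Real.log σY2
  - ((n : ℝ)/2) * ((sX2 + (xbar - μ)^2) / σX2)
  - ((m : ℝ)/2) * ((sY2 + (ybar - μ)^2) / σY2)

/-!
The two variance equations `∂ℓ/∂σX² = ∂ℓ/∂σY² = 0` hold for every `μ` once
`σX² = (x̄ - μ)² + sX²` and `σY² = (ȳ - μ)² + sY²`, because `t ↦ log t + S / t` is stationary at
`t = S`. Substituting these variances into the mean equation
`n (x̄ - μ) / σX² + m (ȳ - μ) / σY² = 0` and clearing denominators gives, after dividing by `m`,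
exactly minus the Behrens-Fisher cubic.
-/

open Real

lemma hasDerivAt_log_add_div_self {S : ℝ} (hS : S ≠ 0) :
    HasDerivAt (fun t => log t + S / t) 0 S := by
  simp only [div_eq_mul_inv]
  refine ((hasDerivAt_log hS).fun_add ((hasDerivAt_inv hS).const_mul S)).congr_deriv ?_
  field_simp
  ring

lemma hasDerivAt_add_sub_sq_div (a s σ μ : ℝ) :
    HasDerivAt (fun t => (s + (a - t) ^ 2) / σ) (-(2 * (a - μ)) / σ) μ := by
  refine ((((hasDerivAt_id μ).const_sub a).fun_pow 2).const_add s |>.div_const σ).congr_deriv ?_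
  simp

lemma ell_swap (n m : ℕ) (xbar ybar sX2 sY2 μ σX2 σY2 : ℝ) :
    ell n m xbar ybar sX2 sY2 μ σX2 σY2 = ell m n ybar xbar sY2 sX2 μ σY2 σX2 := by
  unfold ell
  ring

lemma hasDerivAt_ell_mean (n m : ℕ) (xbar ybar sX2 sY2 μ σX2 σY2 : ℝ) :
    HasDerivAt (fun t => ell n m xbar ybar sX2 sY2 t σX2 σY2)
      (n * (xbar - μ) / σX2 + m * (ybar - μ) / σY2) μ := by
  refine ((((hasDerivAt_add_sub_sq_div xbar sX2 σX2 μ).const_mul ((n : ℝ) / 2)).const_sub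
    (-((n + m : ℝ) / 2) * log (2 * π) - (n / 2) * log σX2 - (m / 2) * log σY2)).fun_sub
    ((hasDerivAt_add_sub_sq_div ybar sY2 σY2 μ).const_mul ((m : ℝ) / 2))).congr_deriv ?_
  ring

lemma hasDerivAt_ell_varX (n m : ℕ) (xbar ybar sX2 sY2 μ σY2 : ℝ)
    (hσ : (xbar - μ) ^ 2 + sX2 ≠ 0) :
    HasDerivAt (fun t => ell n m xbar ybar sX2 sY2 μ t σY2) 0 ((xbar - μ) ^ 2 + sX2) := by
  have h := ((hasDerivAt_log_add_div_self hσ).const_mul ((n : ℝ) / 2)).const_sub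
    (-((n + m : ℝ) / 2) * log (2 * π) - (m / 2) * log σY2
      - (m / 2) * ((sY2 + (ybar - μ) ^ 2) / σY2))
  rw [mul_zero, neg_zero] at h
  refine h.congr_of_eventuallyEq (Filter.Eventually.of_forall fun t => ?_)
  unfold ell
  ring

lemma hasDerivAt_ell_varY (n m : ℕ) (xbar ybar sX2 sY2 μ σX2 : ℝ)
    (hσ : (ybar - μ) ^ 2 + sY2 ≠ 0) :
    HasDerivAt (fun t => ell n m xbar ybar sX2 sY2 μ σX2 t) 0 ((ybar - μ) ^ 2 + sY2) := by
  simpa only [ell_swap n m] using hasDerivAt_ell_varX m n ybar xbar sY2 sX2 μ σX2 hσ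

lemma behrensFisher_cubic_eq (r xbar ybar sX2 sY2 μ : ℝ) :
    (1 + r)*μ^3 - ((2*xbar + ybar) + r*(2*ybar + xbar))*μ^2
      + (xbar^2 + 2*(1+r)*xbar*ybar + r*ybar^2 + sX2 + r*sY2)*μ
      - (xbar^2*ybar + r*ybar^2*xbar + sX2*ybar + r*sY2*xbar)
    = -(r * (xbar - μ) * ((ybar - μ) ^ 2 + sY2) + (ybar - μ) * ((xbar - μ) ^ 2 + sX2)) := by
  ring

theorem cubic_root_gives_critical_point_general
    (n m : ℕ) (hm : 2 ≤ m)
    (xbar ybar sX2 sY2 : ℝ) (hsX : 0 < sX2) (hsY : 0 < sY2)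
    (r : ℝ) (hr : r = (n : ℝ) / m)
    (μ : ℝ)
    (hroot : (1 + r)*μ^3 - ((2*xbar + ybar) + r*(2*ybar + xbar))*μ^2
      + (xbar^2 + 2*(1+r)*xbar*ybar + r*ybar^2 + sX2 + r*sY2)*μ
      - (xbar^2*ybar + r*ybar^2*xbar + sX2*ybar + r*sY2*xbar) = 0)
    (σX2 σY2 : ℝ)
    (hσX : σX2 = (xbar - μ)^2 + sX2) (hσY : σY2 = (ybar - μ)^2 + sY2) :
    deriv (fun t => ell n m xbar ybar sX2 sY2 t σX2 σY2) μ = 0 ∧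
    deriv (fun t => ell n m xbar ybar sX2 sY2 μ t σY2) σX2 = 0 ∧
    deriv (fun t => ell n m xbar ybar sX2 sY2 μ σX2 t) σY2 = 0 := by
  have hm0 : (m : ℝ) ≠ 0 := by norm_cast; omega
  have hσX0 : σX2 ≠ 0 := by rw [hσX]; positivity
  have hσY0 : σY2 ≠ 0 := by rw [hσY]; positivity
  refine ⟨(hasDerivAt_ell_mean n m xbar ybar sX2 sY2 μ σX2 σY2).deriv.trans ?_, ?_, ?_⟩
  · have hscore : r * (xbar - μ) * σY2 + (ybar - μ) * σX2 = 0 := by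
      rw [hσX, hσY, ← neg_eq_zero, ← behrensFisher_cubic_eq, hroot]
    rw [hr] at hscore
    field_simp at hscore ⊢
    linear_combination hscore
  · subst hσX
    exact (hasDerivAt_ell_varX n m xbar ybar sX2 sY2 μ σY2 hσX0).deriv
  · subst hσY
    exact (hasDerivAt_ell_varY n m xbar ybar sX2 sY2 μ σX2 hσY0).deriv

theorem cubic_root_gives_critical_point
    (n m : ℕ) (hn : 2 ≤ n) (hm : 2 ≤ m)
    (xbar ybar sX2 sY2 : ℝ) (hsX : 0 < sX2) (hsY : 0 < sY2)
    (r : ℝ) (hr : r = (n : ℝ) / m)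
    (μ : ℝ)
    (hroot : (1 + r)*μ^3 - ((2*xbar + ybar) + r*(2*ybar + xbar))*μ^2
      + (xbar^2 + 2*(1+r)*xbar*ybar + r*ybar^2 + sX2 + r*sY2)*μ
      - (xbar^2*ybar + r*ybar^2*xbar + sX2*ybar + r*sY2*xbar) = 0)
    (σX2 σY2 : ℝ)
    (hσX : σX2 = (xbar - μ)^2 + sX2) (hσY : σY2 = (ybar - μ)^2 + sY2) :
    deriv (fun t => ell n m xbar ybar sX2 sY2 t σX2 σY2) μ = 0 ∧
    deriv (fun t => ell n m xbar ybar sX2 sY2 μ t σY2) σX2 = 0 ∧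
    deriv (fun t => ell n m xbar ybar sX2 sY2 μ σX2 t) σY2 = 0 :=
  cubic_root_gives_critical_point_general n m hm xbar ybar sX2 sY2 hsX hsY r hr μ hroot σX2 σY2 hσX
    hσY
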